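/- Let k be a field of characteristic 0, f ∈ k[x_1,...,x_n] nonzero, and suppose a ∈ ℤ is such that b_f(a - j) ≠ 0 for all integers j ≥ 1 (e.g., a is the minimal integer root of b_f(s), or smaller). Then 1/f^{-a} generates the localization k[x_1,...,x_n]_f as a module over the Weyl algebra A_n(k). -/

import Mathlib

open MvPolynomial

noncomputable section BernsteinSato

namespace BS

variable (k : Type*) [Field k] [CharZero k] (n : ℕ)

/-- The fraction field of the polynomial ring `k[x_1, ..., x_n]`. -/
abbrev K := FractionRing (MvPolynomial (Fin n) k)

/-- The canonical map `k[x_1,...,x_n] → K`. -/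
abbrev ι : MvPolynomial (Fin n) k →+* K k n :=
  algebraMap (MvPolynomial (Fin n) k) (K k n)

/-- The partial derivative `∂/∂x_i` extended to the fraction field `K` by the
quotient rule `d(a/b) = (b·da - a·db)/b²`. -/
def pd (i : Fin n) (x : K k n) : K k n :=
  let s := IsLocalization.sec (nonZeroDivisors (MvPolynomial (Fin n) k)) x
  (ι k n (pderiv i s.1) * ι k n (s.2 : MvPolynomial (Fin n) k)
      - ι k n s.1 * ι k n (pderiv i (s.2 : MvPolynomial (Fin n) k)))
    / (ι k n (s.2 : MvPolynomial (Fin n) k)) ^ 2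

/-- The coefficientwise extension of `pd i` to `K[s]`. -/
def pdS (i : Fin n) (p : Polynomial (K k n)) : Polynomial (K k n) :=
  p.sum fun j c => Polynomial.C (pd k n i c) * Polynomial.X ^ j

/-- The action of `∂_i` on the module `k[x, 1/f, s]·f^s`, where an element
`p ∈ K[s]` represents `p·f^s` :
`∂_i (p f^s) = ((∂p/∂x_i) + s p (∂f/∂x_i)/f) f^s`. -/
def Dop (f : MvPolynomial (Fin n) k) (i : Fin n) (p : Polynomial (K k n)) :
    Polynomial (K k n) :=
  pdS k n i p + Polynomial.X * Polynomial.C (ι k n (pderiv i f) / ι k n f) * p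

/-- The predicate `InSub f p` says that `p·f^s` belongs to the `A_n(k)[s]`-submodule
of `k[x, 1/f, s]·f^s` generated by `f^{s+1} = f·f^s`; that is, `p·f^s = Q·f^{s+1}`
for some operator `Q ∈ A_n(k)[s]`. The submodule is the closure of `{f·f^s}` under
addition, scalar multiplication by `k`, multiplication by the `x_i`, multiplication
by `s`, and the action of the `∂_i`. -/
inductive InSub (f : MvPolynomial (Fin n) k) : Polynomial (K k n) → Prop
  | base : InSub f (Polynomial.C (ι k n f))
  | add {p q} : InSub f p → InSub f q → InSub f (p + q)
  | smul (c : k) {p} : InSub f p →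
      InSub f (Polynomial.C (ι k n (MvPolynomial.C c)) * p)
  | mulX (i : Fin n) {p} : InSub f p →
      InSub f (Polynomial.C (ι k n (MvPolynomial.X i)) * p)
  | mulS {p} : InSub f p → InSub f (Polynomial.X * p)
  | diff (i : Fin n) {p} : InSub f p → InSub f (Dop k n f i p)

/-- `J(f)`: the set of polynomials `b(s) ∈ k[s]` for which there exists
`Q ∈ A_n(k)[s]` with `b(s)·f^s = Q·f^{s+1}`. -/
def bsSet (f : MvPolynomial (Fin n) k) : Set (Polynomial k) :=
  {b | InSub k n f (b.map ((ι k n).comp (MvPolynomial.C)))}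

/-- `b` is the Bernstein–Sato polynomial of `f`: the monic generator of the
ideal `J(f)` of polynomials satisfying the functional equation. -/
def IsBernsteinSato (f : MvPolynomial (Fin n) k) (b : Polynomial k) : Prop :=
  b.Monic ∧ b ∈ bsSet k n f ∧ ∀ c ∈ bsSet k n f, b ∣ c

end BS

end BernsteinSato

noncomputable section Loc

namespace BS

variable (k : Type*) [Field k] [CharZero k] (n : ℕ)

/-- The partial derivative `∂/∂x_i` extended to the localization
`R_f = k[x][1/f]` by the quotient rule. -/
def pdAway (f : MvPolynomial (Fin n) k) (i : Fin n)
    (x : Localization.Away f) : Localization.Away f :=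
  let s := IsLocalization.sec (Submonoid.powers f) x
  Localization.mk
    (pderiv i s.1 * (s.2 : MvPolynomial (Fin n) k)
      - s.1 * pderiv i (s.2 : MvPolynomial (Fin n) k))
    (s.2 * s.2)

/-- `GenAway f v y` : `y` belongs to the `A_n(k)`-submodule of `R_f` generated
by `v`, i.e. the closure of `{v}` under addition, `k`-scalar multiplication,
multiplication by the variables `x_i` and the action of the `∂_i`. -/
inductive GenAway (f : MvPolynomial (Fin n) k) (v : Localization.Away f) :
    Localization.Away f → Prop
  | base : GenAway f v v
  | add {p q} : GenAway f v p → GenAway f v q → GenAway f v (p + q)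
  | smul (c : k) {p} : GenAway f v p →
      GenAway f v
        (algebraMap (MvPolynomial (Fin n) k) (Localization.Away f)
          (MvPolynomial.C c) * p)
  | mulX (i : Fin n) {p} : GenAway f v p →
      GenAway f v
        (algebraMap (MvPolynomial (Fin n) k) (Localization.Away f)
          (MvPolynomial.X i) * p)
  | diff (i : Fin n) {p} : GenAway f v p → GenAway f v (pdAway k n f i p)

end BS

end Loc

/-!
Specializing the functional equation `b(s)·f^s = Q(s)·f^{s+1}` at an integer `s = t` shows
that `b(t)·f^t` lies in `A_n(k)·f^{t+1}`; hence `f^t ∈ A_n(k)·f^{t+1}` whenever `b(t) ≠ 0`.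
Descending from `t = a - 1`, every `f^m` with `m ≤ a` lies in `A_n(k)·f^a`, and every element of
`R_f` is `g·f^m` with `g` a polynomial and `m ≤ a`.

To make the specialization precise, `R_f` is embedded into the fraction field `K`, where `p·f^s`
at `s = t` becomes `p(t)·f^t` and the `∂_i` of `R_f` and of `K` correspond.
-/

namespace BS

variable {k : Type*} [Field k] {n : ℕ}

section FractionField

lemma ι_injective : Function.Injective (ι k n) :=
  IsFractionRing.injective _ _

lemma ι_ne_zero {g : MvPolynomial (Fin n) k} (hg : g ≠ 0) : ι k n g ≠ 0 :=
  (map_ne_zero_iff _ ι_injective).2 hg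

lemma exists_eq_ι_div_ι (x : K k n) :
    ∃ p q : MvPolynomial (Fin n) k, q ≠ 0 ∧ x = ι k n p / ι k n q := by
  obtain ⟨p, q, hq, rfl⟩ := IsFractionRing.div_surjective (A := MvPolynomial (Fin n) k) x
  exact ⟨p, q, nonZeroDivisors.ne_zero hq, rfl⟩

/-- `pd` is defined through a chosen representative; this is its value on any other one. -/
lemma pd_ι_div_ι (i : Fin n) (p q : MvPolynomial (Fin n) k) (hq : q ≠ 0) :
    pd k n i (ι k n p / ι k n q)
      = (ι k n (pderiv i p) * ι k n q - ι k n p * ι k n (pderiv i q)) / ι k n q ^ 2 := by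
  have hsec := IsLocalization.sec_spec (nonZeroDivisors (MvPolynomial (Fin n) k))
    (ι k n p / ι k n q)
  set s := IsLocalization.sec (nonZeroDivisors (MvPolynomial (Fin n) k)) (ι k n p / ι k n q)
  have hs₂ : ι k n (s.2 : MvPolynomial (Fin n) k) ≠ 0 :=
    ι_ne_zero (nonZeroDivisors.ne_zero s.2.property)
  have hq' : ι k n q ≠ 0 := ι_ne_zero hq
  have hcross : p * s.2 = s.1 * q := by
    apply ι_injective
    rw [map_mul, map_mul, ← hsec]
    field_simp
  have hcrossK := congrArg (ι k n) hcross
  have hderivK := congrArg (fun g => ι k n (pderiv i g)) hcross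
  simp only [map_mul, Derivation.leibniz, smul_eq_mul, map_add] at hcrossK hderivK
  rw [pd, div_eq_div_iff (pow_ne_zero 2 hs₂) (pow_ne_zero 2 hq')]
  linear_combination (-(ι k n q * ι k n s.2)) * hderivK
    + (ι k n (pderiv i (s.2 : MvPolynomial (Fin n) k)) * ι k n q
        + ι k n (pderiv i q) * ι k n s.2) * hcrossK

lemma pd_ι (i : Fin n) (g : MvPolynomial (Fin n) k) :
    pd k n i (ι k n g) = ι k n (pderiv i g) := by
  simpa using pd_ι_div_ι i g 1 one_ne_zero

lemma pd_add (i : Fin n) (x y : K k n) : pd k n i (x + y) = pd k n i x + pd k n i y := by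
  obtain ⟨p, q, hq, rfl⟩ := exists_eq_ι_div_ι x
  obtain ⟨r, u, hu, rfl⟩ := exists_eq_ι_div_ι y
  have hsum : ι k n p / ι k n q + ι k n r / ι k n u
      = ι k n (p * u + r * q) / ι k n (q * u) := by
    field_simp [ι_ne_zero hq, ι_ne_zero hu]
    simp only [map_add, map_mul]
    ring
  rw [hsum, pd_ι_div_ι _ _ _ (mul_ne_zero hq hu), pd_ι_div_ι _ _ _ hq, pd_ι_div_ι _ _ _ hu]
  simp only [map_add, Derivation.leibniz, smul_eq_mul, map_mul]
  field_simp [ι_ne_zero hq, ι_ne_zero hu]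
  ring

lemma pd_mul (i : Fin n) (x y : K k n) :
    pd k n i (x * y) = x * pd k n i y + y * pd k n i x := by
  obtain ⟨p, q, hq, rfl⟩ := exists_eq_ι_div_ι x
  obtain ⟨r, u, hu, rfl⟩ := exists_eq_ι_div_ι y
  have hprod : ι k n p / ι k n q * (ι k n r / ι k n u) = ι k n (p * r) / ι k n (q * u) := by
    rw [map_mul, map_mul, div_mul_div_comm]
  rw [hprod, pd_ι_div_ι _ _ _ (mul_ne_zero hq hu), pd_ι_div_ι _ _ _ hq, pd_ι_div_ι _ _ _ hu]
  simp only [map_add, Derivation.leibniz, smul_eq_mul, map_mul]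
  field_simp [ι_ne_zero hq, ι_ne_zero hu]
  ring

noncomputable def pdDerivation (i : Fin n) : Derivation ℤ (K k n) (K k n) where
  toFun := pd k n i
  map_add' := pd_add i
  map_smul' t x := by simpa using map_zsmul (AddMonoidHom.mk' (pd k n i) (pd_add i)) t x
  map_one_eq_zero' := by simpa using pd_ι i (1 : MvPolynomial (Fin n) k)
  leibniz' := pd_mul i

@[simp]
lemma pdDerivation_apply (i : Fin n) (x : K k n) : pdDerivation i x = pd k n i x := rfl

lemma pd_zpow (i : Fin n) (x : K k n) (t : ℤ) :
    pd k n i (x ^ t) = t * x ^ (t - 1) * pd k n i x := by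
  simpa [← mul_assoc] using (pdDerivation i).leibniz_zpow x t

lemma eval_intCast_pdS (i : Fin n) (p : Polynomial (K k n)) (t : ℤ) :
    (pdS k n i p).eval (t : K k n) = pd k n i (p.eval (t : K k n)) := by
  have hpow (j : ℕ) : pdDerivation i ((t : K k n) ^ j) = 0 := by simp
  rw [pdS, Polynomial.sum, Polynomial.eval_finsetSum, ← pdDerivation_apply,
    Polynomial.eval_eq_sum, Polynomial.sum, map_sum]
  refine Finset.sum_congr rfl fun j _ => ?_
  rw [Derivation.leibniz, hpow, smul_zero, zero_add, smul_eq_mul, pdDerivation_apply,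
    Polynomial.eval_mul, Polynomial.eval_C, Polynomial.eval_pow, Polynomial.eval_X, mul_comm]

end FractionField

section Localization

variable (f : MvPolynomial (Fin n) k)

noncomputable def awayToK (hf : f ≠ 0) : Localization.Away f →+* K k n :=
  IsLocalization.lift (M := Submonoid.powers f) fun q =>
    isUnit_iff_ne_zero.2 <| ι_ne_zero <| nonZeroDivisors.ne_zero <|
      powers_le_nonZeroDivisors_of_noZeroDivisors hf q.2

noncomputable def awayUnit : (Localization.Away f)ˣ :=
  (IsLocalization.map_units (M := Submonoid.powers f) (Localization.Away f)
    ⟨f, Submonoid.mem_powers f⟩).unit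

variable {f}

lemma awayUnit_zpow_natCast (e : ℕ) :
    ((awayUnit f ^ (e : ℤ) : (Localization.Away f)ˣ) : Localization.Away f)
      = algebraMap _ _ (f ^ e) := by
  rw [zpow_natCast, Units.val_pow_eq_pow_val, map_pow]
  rfl

lemma exists_eq_algebraMap_mul_awayUnit_zpow (y : Localization.Away f) (a : ℤ) :
    ∃ (g : MvPolynomial (Fin n) k) (m : ℤ), m ≤ a ∧
      y = algebraMap _ _ g * ((awayUnit f ^ m : (Localization.Away f)ˣ) : _) := by
  obtain ⟨e, g, hg⟩ := IsLocalization.Away.surj f y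
  have hy : y = algebraMap _ _ g * ((awayUnit f ^ (-e : ℤ) : (Localization.Away f)ˣ) : _) := by
    rw [← hg, ← map_pow, ← awayUnit_zpow_natCast, mul_assoc, ← Units.val_mul, ← zpow_add,
      add_neg_cancel, zpow_zero, Units.val_one, mul_one]
  refine ⟨g * f ^ (-(a + e)).toNat, -e - (-(a + e)).toNat, by omega, ?_⟩
  rw [hy, map_mul, mul_assoc, ← awayUnit_zpow_natCast, ← Units.val_mul, ← zpow_add]
  congr
  omega

variable (hf : f ≠ 0)

@[simp]
lemma awayToK_algebraMap (g : MvPolynomial (Fin n) k) :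
    awayToK f hf (algebraMap _ _ g) = ι k n g :=
  IsLocalization.lift_eq _ _

lemma awayToK_injective : Function.Injective (awayToK f hf) := by
  rw [awayToK, IsLocalization.lift_injective_iff]
  exact fun x y => (IsLocalization.injective _
    (powers_le_nonZeroDivisors_of_noZeroDivisors hf)).eq_iff.trans ι_injective.eq_iff.symm

lemma awayToK_mk' (p : MvPolynomial (Fin n) k) (q : Submonoid.powers f) :
    awayToK f hf (IsLocalization.mk' _ p q) = ι k n p / ι k n q := by
  rw [awayToK, IsLocalization.lift_mk'_spec, mul_div_cancel₀]
  exact ι_ne_zero (nonZeroDivisors.ne_zero (powers_le_nonZeroDivisors_of_noZeroDivisors hf q.2))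

lemma awayToK_pdAway (i : Fin n) (x : Localization.Away f) :
    awayToK f hf (pdAway k n f i x) = pd k n i (awayToK f hf x) := by
  set s := IsLocalization.sec (Submonoid.powers f) x
  have hs₂ : (s.2 : MvPolynomial (Fin n) k) ≠ 0 :=
    nonZeroDivisors.ne_zero (powers_le_nonZeroDivisors_of_noZeroDivisors hf s.2.2)
  conv_rhs => rw [← IsLocalization.mk'_sec (M := Submonoid.powers f) (Localization.Away f) x]
  rw [pdAway, Localization.mk_eq_mk', awayToK_mk', awayToK_mk', pd_ι_div_ι _ _ _ hs₂,
    Submonoid.coe_mul, map_mul, map_sub, map_mul, map_mul, sq]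

lemma awayToK_awayUnit_zpow (t : ℤ) :
    awayToK f hf ((awayUnit f ^ t : (Localization.Away f)ˣ) : Localization.Away f)
      = ι k n f ^ t := by
  change ((Units.map (awayToK f hf : Localization.Away f →* K k n) (awayUnit f ^ t) :
    (K k n)ˣ) : K k n) = _
  rw [map_zpow, Units.val_zpow_eq_zpow_val]
  exact congrArg (· ^ t) (awayToK_algebraMap hf f)

end Localization

namespace GenAway

variable {f : MvPolynomial (Fin n) k} {u v w : Localization.Away f}

lemma trans (hvw : GenAway k n f v w) (hwu : GenAway k n f w u) : GenAway k n f v u := by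
  induction hwu with
  | base => exact hvw
  | add _ _ ihp ihq => exact add ihp ihq
  | smul c _ ih => exact smul c ih
  | mulX i _ ih => exact mulX i ih
  | diff i _ ih => exact diff i ih

lemma algebraMap_mul (hw : GenAway k n f v w) (g : MvPolynomial (Fin n) k) :
    GenAway k n f v (algebraMap _ _ g * w) := by
  induction g using MvPolynomial.induction_on with
  | C c => exact smul c hw
  | add p q ihp ihq => simpa only [map_add, add_mul] using add ihp ihq
  | mul_X p i ih =>
    simpa only [map_mul, mul_comm _ (algebraMap _ _ (X i)), mul_assoc] using mulX i ih

end GenAway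

section Descent

variable {f : MvPolynomial (Fin n) k} (hf : f ≠ 0)
include hf

theorem InSub.exists_genAway_eval {p : Polynomial (K k n)} (hp : InSub k n f p) (t : ℤ) :
    ∃ y, GenAway k n f ((awayUnit f ^ (t + 1) : (Localization.Away f)ˣ) : _) y ∧
      awayToK f hf y = p.eval (t : K k n) * ι k n f ^ t := by
  have hF : ι k n f ≠ 0 := ι_ne_zero hf
  induction hp with
  | base =>
    refine ⟨_, .base, ?_⟩
    rw [awayToK_awayUnit_zpow, Polynomial.eval_C, zpow_add_one₀ hF, mul_comm]
  | add _ _ ihp ihq =>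
    obtain ⟨y, hy, hyp⟩ := ihp
    obtain ⟨z, hz, hzq⟩ := ihq
    exact ⟨y + z, hy.add hz, by rw [map_add, hyp, hzq, Polynomial.eval_add, add_mul]⟩
  | smul c _ ih =>
    obtain ⟨y, hy, hyp⟩ := ih
    refine ⟨_, hy.smul c, ?_⟩
    rw [map_mul, awayToK_algebraMap, hyp, Polynomial.eval_mul, Polynomial.eval_C, mul_assoc]
  | mulX i _ ih =>
    obtain ⟨y, hy, hyp⟩ := ih
    refine ⟨_, hy.mulX i, ?_⟩
    rw [map_mul, awayToK_algebraMap, hyp, Polynomial.eval_mul, Polynomial.eval_C, mul_assoc]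
  | mulS _ ih =>
    obtain ⟨y, hy, hyp⟩ := ih
    refine ⟨_, hy.smul (t : k), ?_⟩
    rw [map_mul, awayToK_algebraMap, hyp, Polynomial.eval_mul, Polynomial.eval_X, map_intCast,
      map_intCast, mul_assoc]
  | diff i _ ih =>
    obtain ⟨y, hy, hyp⟩ := ih
    refine ⟨_, hy.diff i, ?_⟩
    rw [awayToK_pdAway, hyp, pd_mul, pd_zpow, pd_ι, Dop, Polynomial.eval_add, eval_intCast_pdS,
      Polynomial.eval_mul, Polynomial.eval_mul, Polynomial.eval_C, Polynomial.eval_X,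
      zpow_sub_one₀ hF]
    field_simp
    ring

lemma genAway_zpow_of_mem_bsSet {b : Polynomial k} (hb : b ∈ bsSet k n f) (t : ℤ)
    (hbt : b.eval (t : k) ≠ 0) :
    GenAway k n f ((awayUnit f ^ (t + 1) : (Localization.Away f)ˣ) : Localization.Away f)
      ((awayUnit f ^ t : (Localization.Away f)ˣ) : Localization.Away f) := by
  obtain ⟨y, hy, hyb⟩ := InSub.exists_genAway_eval hf hb t
  have heval : (b.map ((ι k n).comp C)).eval (t : K k n) = ι k n (C (b.eval (t : k))) := by
    rw [← map_intCast ((ι k n).comp C) t, Polynomial.eval_map_apply, RingHom.comp_apply]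
  convert hy.smul (b.eval (t : k))⁻¹ using 1
  apply awayToK_injective hf
  rw [map_mul, awayToK_algebraMap, hyb, heval, ← mul_assoc, ← map_mul, ← map_mul,
    inv_mul_cancel₀ hbt, map_one, map_one, one_mul, awayToK_awayUnit_zpow]

lemma genAway_zpow_of_le {b : Polynomial k} (hb : b ∈ bsSet k n f) {a : ℤ}
    (hroots : ∀ t : ℤ, t < a → b.eval (t : k) ≠ 0) {m : ℤ} (hm : m ≤ a) :
    GenAway k n f ((awayUnit f ^ a : (Localization.Away f)ˣ) : Localization.Away f)
      ((awayUnit f ^ m : (Localization.Away f)ˣ) : Localization.Away f) := by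
  induction m, hm using Int.leInductionDown with
  | base => exact .base
  | pred m hm ih =>
    refine ih.trans ?_
    simpa using genAway_zpow_of_mem_bsSet hf hb (m - 1) (hroots _ (by omega))

end Descent

end BS

theorem localization_generated_by_power_general
    (k : Type*) [Field k] (n : ℕ)
    (f : MvPolynomial (Fin n) k) (hf : f ≠ 0)
    (b : Polynomial k) (hb : BS.IsBernsteinSato k n f b)
    (a : ℤ)
    (ha : ∀ j : ℕ, 1 ≤ j → Polynomial.eval ((a : k) - (j : k)) b ≠ 0) :
    ∀ y : Localization.Away f,
      BS.GenAway k n f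
        (((IsLocalization.map_units (M := Submonoid.powers f)
              (Localization.Away f)
              ⟨f, Submonoid.mem_powers f⟩).unit ^ a :
            (Localization.Away f)ˣ) : Localization.Away f) y := by
  have hroots (t : ℤ) (ht : t < a) : b.eval (t : k) ≠ 0 := by
    obtain ⟨j, hj⟩ : ∃ j : ℕ, a - t = j := ⟨(a - t).toNat, by omega⟩
    convert ha j (by omega)
    rw [show t = a - j by omega]
    push_cast
    rfl
  intro y
  obtain ⟨g, m, hm, rfl⟩ := BS.exists_eq_algebraMap_mul_awayUnit_zpow y a
  exact (BS.genAway_zpow_of_le hf hb.2.1 hroots hm).algebraMap_mul g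

theorem localization_generated_by_power
    (k : Type*) [Field k] [CharZero k] (n : ℕ)
    (f : MvPolynomial (Fin n) k) (hf : f ≠ 0)
    (b : Polynomial k) (hb : BS.IsBernsteinSato k n f b)
    (a : ℤ)
    (ha : ∀ j : ℕ, 1 ≤ j → Polynomial.eval ((a : k) - (j : k)) b ≠ 0) :
    ∀ y : Localization.Away f,
      BS.GenAway k n f
        (((IsLocalization.map_units (M := Submonoid.powers f)
              (Localization.Away f)
              ⟨f, Submonoid.mem_powers f⟩).unit ^ a :
            (Localization.Away f)ˣ) : Localization.Away f) y :=
  localization_generated_by_power_general k n f hf b hb a ha
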